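/- arXiv:2406.00455 — 2 statements merged into one kernel-verified Lean document; each statement's English description precedes it below -/
import Mathlib

section
/- In a school choice problem, if each student i lists his stable-matching assignment μ(i) as his only acceptable school, then the resulting preference profile is a Nash equilibrium of the preference revelation game induced by the student-proposing deferred acceptance mechanism, and the equilibrium outcome equals μ. -/
set_option linter.unusedSectionVars false

namespace SchoolChoice

/-- A strict preference over `S ∪ {self}`, encoded by an injective ranking function on
`Option S`; `none` denotes being unmatched (the student himself), and a smaller rank
means more preferred. Injective rankings on a finite set are exactly strict linear orders. -/
structure Pref (S : Type) where
  rank : Option S → ℕ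
  inj : Function.Injective rank

/-- Quotas together with strict priorities of the schools: `prank s` ranks the students
at school `s`, a smaller rank meaning higher priority. -/
structure Prio (I S : Type) where
  quota : S → ℕ
  prank : S → I → ℕ
  inj : ∀ s, Function.Injective (prank s)

variable {I S : Type} [Fintype I] [Fintype S] [DecidableEq I] [DecidableEq S]

/-- `i` has strictly higher priority than `j` at school `s`. -/
def Prio.higher (E : Prio I S) (s : S) (i j : I) : Prop :=
  E.prank s i < E.prank s j

/-- A matching assigns to each student a school or himself (`none`). -/
abbrev Matching (I S : Type) := I → Option S

/-- The set of students assigned to school `s`. -/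
def assigned (μ : Matching I S) (s : S) : Finset I :=
  Finset.univ.filter (fun i => μ i = some s)

/-- Quotas are respected. -/
def Feasible (E : Prio I S) (μ : Matching I S) : Prop :=
  ∀ s, (assigned μ s).card ≤ E.quota s

/-- `(i, s)` is a blocking pair of `μ` with respect to preferences `R`:
`i` strictly prefers `s` to his assignment, and either `s` has an empty seat
(wastefulness) or some student assigned to `s` has lower priority than `i`
(justified envy). -/
def Blocks (E : Prio I S) (R : I → Pref S) (μ : Matching I S) (i : I) (s : S) : Prop :=
  (R i).rank (some s) < (R i).rank (μ i) ∧
    ((assigned μ s).card < E.quota s ∨ ∃ j, μ j = some s ∧ E.higher s i j)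

/-- Individual rationality: every student weakly prefers his assignment to being unmatched. -/
def IndivRat (R : I → Pref S) (μ : Matching I S) : Prop :=
  ∀ i, (R i).rank (μ i) ≤ (R i).rank none

/-- Non-wastefulness: no student prefers a school with an empty seat to his assignment. -/
def NonWasteful (E : Prio I S) (R : I → Pref S) (μ : Matching I S) : Prop :=
  ∀ i s, (R i).rank (some s) < (R i).rank (μ i) → E.quota s ≤ (assigned μ s).card

/-- Stability: feasible, individually rational, and no blocking pair
(no justified envy and non-wasteful). -/
def Stable (E : Prio I S) (R : I → Pref S) (μ : Matching I S) : Prop :=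
  Feasible E μ ∧ IndivRat R μ ∧ ∀ i s, ¬ Blocks E R μ i s

/-- The student-optimal stable matching for the (reported) preferences. -/
def StudentOptimal (E : Prio I S) (R : I → Pref S) (μ : Matching I S) : Prop :=
  Stable E R μ ∧ ∀ ν, Stable E R ν → ∀ i, (R i).rank (μ i) ≤ (R i).rank (ν i)

open Classical in
/-- The student-proposing deferred acceptance mechanism: by the Gale–Shapley theorem its
outcome is the (unique) student-optimal stable matching of the reported preferences. -/
noncomputable def DA (E : Prio I S) (R : I → Pref S) : Matching I S :=
  if h : ∃ μ, StudentOptimal E R μ then h.choose else fun _ => none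

/-- A strict upper bound for the values of a ranking. -/
noncomputable def bnd (p : Pref S) : ℕ := (Finset.univ.sup p.rank) + 1

lemma rank_lt_bnd (p : Pref S) (x : Option S) : p.rank x < bnd p :=
  Nat.lt_succ_of_le (Finset.le_sup (Finset.mem_univ x))

private lemma mul_add_lt {a K B r : ℕ} (ha : a ≤ K) (hr : r < B) :
    a * B + r < (K + 1) * B := by
  calc a * B + r < a * B + B := by omega
    _ = (a + 1) * B := by ring
    _ ≤ (K + 1) * B := Nat.mul_le_mul (by omega) le_rfl

/-- Is an alternative "inside the market" `A`?  `none` always is. -/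
def goodB (A : S → Prop) [DecidablePred A] : Option S → Bool
  | none => true
  | some s => decide (A s)

/-- The preference truncated to the set of schools `A`: schools in `A` (and the outside
option `none`) keep their relative order, while all schools outside `A` are pushed below
`none` (become unacceptable), keeping their relative order among themselves. -/
noncomputable def trunc (A : S → Prop) [DecidablePred A] (p : Pref S) : Pref S where
  rank x := (if goodB A x then 0 else bnd p) + p.rank x
  inj := by
    intro x y h
    by_cases hx : goodB A x <;> by_cases hy : goodB A y <;>
      simp only [hx, hy, if_true, if_false, Bool.false_eq_true, zero_add] at h
    · exact p.inj h
    · have := rank_lt_bnd p x; omega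
    · have := rank_lt_bnd p y; omega
    · exact p.inj (by omega)

/-- The reshuffled preference with respect to a tier structure `t`: acceptable schools
are grouped by tier in increasing tier order (keeping the original relative order within
each tier) above `none`, and all unacceptable schools are placed below `none`. -/
noncomputable def reshuffle (t : S → ℕ) (p : Pref S) : Pref S where
  rank x :=
    Option.elim x ((Finset.univ.sup t + 1) * bnd p)
      (fun s =>
        if p.rank (some s) < p.rank none then t s * bnd p + p.rank (some s)
        else (Finset.univ.sup t + 1) * bnd p + 1 + p.rank (some s))
  inj := by
    have hB : ∀ x, p.rank x < bnd p := rank_lt_bnd p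
    have hK : ∀ s : S, t s ≤ Finset.univ.sup t := fun s => Finset.le_sup (Finset.mem_univ s)
    intro x y h
    rcases x with _ | s <;> rcases y with _ | s' <;>
      simp only [Option.elim_none, Option.elim_some] at h
    · rfl
    · by_cases hy : p.rank (some s') < p.rank none <;> simp only [hy, if_true, if_false] at h
      · have := mul_add_lt (hK s') (hB (some s')); omega
      · omega
    · by_cases hx : p.rank (some s) < p.rank none <;> simp only [hx, if_true, if_false] at h
      · have := mul_add_lt (hK s) (hB (some s)); omega
      · omega
    · by_cases hx : p.rank (some s) < p.rank none <;>
        by_cases hy : p.rank (some s') < p.rank none <;>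
        simp only [hx, hy, if_true, if_false] at h
      · have hts : t s = t s' := by
          rcases Nat.lt_trichotomy (t s) (t s') with h1 | h1 | h1
          · have h2 : t s * bnd p + p.rank (some s) < t s' * bnd p + p.rank (some s') := by
              have h3 := mul_add_lt (a := t s) (K := t s' - 1) (B := bnd p) (by omega) (hB (some s))
              have h4 : (t s' - 1 + 1) * bnd p = t s' * bnd p := by congr 1; omega
              omega
            omega
          · exact h1
          · have h2 : t s' * bnd p + p.rank (some s') < t s * bnd p + p.rank (some s) := by
              have h3 := mul_add_lt (a := t s') (K := t s - 1) (B := bnd p) (by omega) (hB (some s'))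
              have h4 : (t s - 1 + 1) * bnd p = t s * bnd p := by congr 1; omega
              omega
            omega
        rw [hts] at h
        exact p.inj (by omega)
      · have := mul_add_lt (hK s) (hB (some s)); omega
      · have := mul_add_lt (hK s') (hB (some s')); omega
      · exact p.inj (by omega)

/-- A tier structure assigning each school a tier in `{1, …, T}`, each tier nonempty. -/
def IsTierStructure (t : S → ℕ) (T : ℕ) : Prop :=
  (∀ s, 1 ≤ t s ∧ t s ≤ T) ∧ ∀ k, 1 ≤ k → k ≤ T → ∃ s, t s = k

/-- Rounds `1, …, k` of the tiered deferred acceptance mechanism: in round `k` the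
students left unmatched so far participate in the DA mechanism with their preferences
truncated to the tier-`k` schools (already matched students participate with nothing
acceptable); students matched in earlier rounds keep their assignments. -/
noncomputable def TDAaux (E : Prio I S) (t : S → ℕ) (Q : I → Pref S) : ℕ → Matching I S
  | 0 => fun _ => none
  | k + 1 => fun i =>
      match TDAaux E t Q k i with
      | some s => some s
      | none =>
          DA E (fun j =>
            if TDAaux E t Q k j = none then trunc (fun s => t s = k + 1) (Q j)
            else trunc (fun _ => False) (Q j)) i

/-- The tiered deferred acceptance mechanism under tier structure `t`. -/
noncomputable def TDA (E : Prio I S) (t : S → ℕ) (Q : I → Pref S) : Matching I S :=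
  TDAaux E t Q (Finset.univ.sup t)

/-- `Q` is a (pure) Nash equilibrium of the preference revelation game induced by the
mechanism `f` when the true preferences are `R`: no student can obtain a school he truly
strictly prefers by unilaterally changing his report. -/
def NashEq (R : I → Pref S) (f : (I → Pref S) → Matching I S) (Q : I → Pref S) : Prop :=
  ∀ (i : I) (Qi' : Pref S),
    (R i).rank (f Q i) ≤ (R i).rank (f (Function.update Q i Qi') i)

/-- `μ` is a Nash equilibrium outcome of the revelation game induced by `f` at true
preferences `R`. -/
def NashOutcome (R : I → Pref S) (f : (I → Pref S) → Matching I S) (μ : Matching I S) : Prop :=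
  ∃ Q, NashEq R f Q ∧ f Q = μ

/-- The preference `p` is aligned with the tier structure `t`: a (weakly) more preferred
school always lies in a weakly earlier tier. -/
def AlignedPref (t : S → ℕ) (p : Pref S) : Prop :=
  ∀ s s' : S, p.rank (some s) ≤ p.rank (some s') → t s ≤ t s'

/-- `p` lists exactly the school in `o` (if any) as acceptable. -/
def OnlyAcceptable (p : Pref S) (o : Option S) : Prop :=
  ∀ s : S, (p.rank (some s) < p.rank none ↔ o = some s)

/-- An Ergin cycle of the priority structure among the schools in `A`. -/
def Cycle (E : Prio I S) (A : S → Prop) : Prop :=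
  ∃ a b : S, A a ∧ A b ∧ a ≠ b ∧ ∃ i j k : I,
    E.higher a i j ∧ E.higher a j k ∧ E.higher b k i ∧
    ∃ Ia Ib : Finset I, Disjoint Ia Ib ∧
      (∀ l ∈ Ia, l ≠ i ∧ l ≠ j ∧ l ≠ k ∧ E.higher a l j) ∧
      (∀ l ∈ Ib, l ≠ i ∧ l ≠ j ∧ l ≠ k ∧ E.higher b l i) ∧
      Ia.card = E.quota a - 1 ∧ Ib.card = E.quota b - 1

/-- Within-tier acyclicity of a generalized priority structure: no Ergin cycle among the
schools of any single tier. -/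
def WithinTierAcyclic (E : Prio I S) (t : S → ℕ) : Prop :=
  ∀ k : ℕ, ¬ Cycle E (fun s => t s = k)

/-- The (strict) preference `pr` of school `s` over sets of students is a responsive
extension of its priorities. -/
def Responsive (E : Prio I S) (s : S) (pr : Finset I → Finset I → Prop) : Prop :=
  ∀ (J : Finset I) (i j : I), i ∉ J → j ∉ J → E.higher s i j →
    pr (insert i J) (insert j J)

/-- `t` is a refinement of `t'`: `t'` ranks `a` in a strictly later tier than `b` only
if `t` does. -/
def Refines (t t' : S → ℕ) : Prop :=
  ∀ a b : S, t' b < t' a → t b < t a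


/-- If each student lists his assignment under a stable matching `μ` as
his only acceptable school, the resulting profile is a Nash equilibrium of the revelation
game induced by the DA mechanism, and the equilibrium outcome equals `μ`. -/
theorem stable_singleton_reports_NashEq_DA
    (E : Prio I S) (R : I → Pref S) (μ : Matching I S)
    (hstable : Stable E R μ)
    (Q : I → Pref S) (hQ : ∀ i, OnlyAcceptable (Q i) (μ i)) :
    NashEq R (DA E) Q ∧ DA E Q = μ := by
  obtain ⟨hfeas, hIR, hnb⟩ := hstable
  -- μ is individually rational under Q
  have hIRQ : IndivRat Q μ := by
    intro i
    cases hμi : μ i with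
    | none => exact le_rfl
    | some s => exact le_of_lt ((hQ i s).mpr hμi)
  -- μ is stable under Q
  have hstQ : Stable E Q μ := by
    refine ⟨hfeas, hIRQ, ?_⟩
    intro i s hb
    have h1 : (Q i).rank (some s) < (Q i).rank none := lt_of_lt_of_le hb.1 (hIRQ i)
    have h2 : μ i = some s := (hQ i s).mp h1
    have hb1 := hb.1
    rw [h2] at hb1
    exact lt_irrefl _ hb1
  -- any Q-stable matching gives each student either none or μ i
  have hkey : ∀ ν, Stable E Q ν → ∀ i, ν i = none ∨ ν i = μ i := by
    intro ν hν i
    cases hνi : ν i with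
    | none => exact Or.inl rfl
    | some s =>
      have hle : (Q i).rank (some s) ≤ (Q i).rank none := by
        have := hν.2.1 i; rwa [hνi] at this
      have hlt : (Q i).rank (some s) < (Q i).rank none := by
        rcases lt_or_eq_of_le hle with h | h
        · exact h
        · exact absurd ((Q i).inj h) (by simp)
      exact Or.inr (((hQ i s).mp hlt).symm)
  have hopt : StudentOptimal E Q μ := by
    refine ⟨hstQ, ?_⟩
    intro ν hν i
    rcases hkey ν hν i with h | h
    · rw [h]; exact hIRQ i
    · rw [h]
  have hex : ∃ ν, StudentOptimal E Q ν := ⟨μ, hopt⟩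
  have hDAQ : DA E Q = μ := by
    have hsp := hex.choose_spec
    rw [DA, dif_pos hex]
    funext i
    have h1 := hsp.2 μ hopt.1 i
    have h2 := hopt.2 _ hsp.1 i
    exact (Q i).inj (le_antisymm h1 h2)
  refine ⟨?_, hDAQ⟩
  intro i Qi'
  rw [hDAQ]
  set Q' := Function.update Q i Qi' with hQ'
  by_cases h : ∃ ν, StudentOptimal E Q' ν
  · have hν : Stable E Q' h.choose := h.choose_spec.1
    set ν := h.choose with hνdef
    have hDAQ' : DA E Q' = ν := by rw [DA, dif_pos h]
    rw [hDAQ']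
    cases hνi : ν i with
    | none => exact hIR i
    | some s =>
      by_contra hcon
      push_neg at hcon
      -- i truly prefers s to μ i; use stability of μ under R
      have hnbis := hnb i s
      rw [Blocks] at hnbis
      push_neg at hnbis
      have hfull : E.quota s ≤ (assigned μ s).card := (hnbis hcon).1
      have hnoenvy : ∀ j, μ j = some s → ¬ E.higher s i j := by
        intro j hj
        have := (hnbis hcon).2 j hj
        exact this
      have hμi : μ i ≠ some s := by
        intro heq; rw [heq] at hcon; exact lt_irrefl _ hcon
      -- every student assigned to s under μ stays at s under ν
      have hstay : ∀ j, μ j = some s → ν j = some s := by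
        intro j hj
        have hji : j ≠ i := by intro heq; rw [heq] at hj; exact hμi hj
        have hQ'j : Q' j = Q j := Function.update_of_ne hji _ _
        by_contra hne
        -- then ν j = none, and (j, s) blocks ν under Q'
        have hνj : ν j = none := by
          rcases hkey' : ν j with _ | s'
          · rfl
          · exfalso
            have hle : (Q' j).rank (some s') ≤ (Q' j).rank none := by
              have := hν.2.1 j; rwa [hkey'] at this
            rw [hQ'j] at hle
            have hlt : (Q j).rank (some s') < (Q j).rank none := by
              rcases lt_or_eq_of_le hle with h' | h'
              · exact h'
              · exact absurd ((Q j).inj h') (by simp)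
            have hμj : μ j = some s' := (hQ j s').mp hlt
            rw [hj] at hμj
            rw [← hμj] at hkey'
            exact hne hkey'
        have hhigher : E.higher s j i := by
          have hne2 : E.prank s j ≠ E.prank s i := fun heq => hji (E.inj s heq)
          have := hnoenvy j hj
          rw [Prio.higher] at this ⊢
          omega
        have hblocks : Blocks E Q' ν j s := by
          refine ⟨?_, Or.inr ⟨i, hνi, hhigher⟩⟩
          rw [hνj, hQ'j]
          exact (hQ j s).mpr hj
        exact hν.2.2 j s hblocks
      -- s is over capacity under ν
      have hsub : insert i (assigned μ s) ⊆ assigned ν s := by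
        intro j hjmem
        rcases Finset.mem_insert.mp hjmem with h' | h'
        · subst h'
          simp [assigned, hνi]
        · simp only [assigned, Finset.mem_filter, Finset.mem_univ, true_and] at h' ⊢
          exact hstay j h'
      have hinot : i ∉ assigned μ s := by
        simp [assigned, hμi]
      have hcard : (assigned μ s).card + 1 ≤ (assigned ν s).card := by
        have := Finset.card_le_card hsub
        rwa [Finset.card_insert_of_notMem hinot] at this
      have := hν.1 s
      omega
  · rw [DA, dif_neg h]
    exact hIR i

end SchoolChoice
end

section
/- Every stable matching of a school choice problem is a Nash equilibrium outcome of the preference revelation game induced by the tiered deferred acceptance mechanism, for any tier structure. -/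
set_option linter.unusedSectionVars false

namespace SchoolChoice

variable {I S : Type} [Fintype I] [Fintype S] [DecidableEq I] [DecidableEq S]

/-! Let every student report only the school he is assigned to in the stable matching `μ`.
In each round of TDA the truncated reports then admit exactly one stable matching, the
restriction of `μ` to that round's tier, so TDA reproduces `μ`. Suppose a student `i`
deviates and obtains a school `s` he truly prefers. By stability of `μ`, the seats of `s`
are filled under `μ` by students of higher priority than `i`; they still report only `s`,
so they are unmatched when the tier of `s` is processed. Since `i` takes a seat of `s` in
that round, one of them is left out and blocks the round's stable matching together
with `s`. -/

@[simp]
lemma mem_assigned {μ : Matching I S} {s : S} {j : I} : j ∈ assigned μ s ↔ μ j = some s := by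
  simp [assigned]

lemma Prio.higher_of_not_higher (E : Prio I S) {s : S} {i j : I} (hne : i ≠ j)
    (h : ¬ E.higher s i j) : E.higher s j i :=
  (not_lt.1 h).lt_of_ne fun heq => hne (E.inj s heq).symm

lemma exists_mem_not_assigned {E : Prio I S} {ν : Matching I S} (hν : Feasible E ν) {s : S}
    {i : I} (hi : ν i = some s) {A : Finset I} (hiA : i ∉ A) (hA : E.quota s ≤ A.card) :
    ∃ j ∈ A, ν j ≠ some s := by
  have hcard : (assigned ν s).card < (insert i A).card := by
    rw [Finset.card_insert_of_notMem hiA]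
    exact Nat.lt_succ_of_le ((hν s).trans hA)
  obtain ⟨j, hjA, hjν⟩ := Finset.exists_mem_notMem_of_card_lt_card hcard
  rw [mem_assigned] at hjν
  exact ⟨j, (Finset.mem_insert.1 hjA).resolve_left (by rintro rfl; exact hjν hi), hjν⟩

def Acceptable (p : Pref S) (s : S) : Prop :=
  p.rank (some s) < p.rank none

lemma IndivRat.acceptable {P : I → Pref S} {ν : Matching I S} (h : IndivRat P ν) {j : I}
    {s : S} (hj : ν j = some s) : Acceptable (P j) s := by
  have hle := h j
  rw [hj] at hle
  exact hle.lt_of_ne fun heq => Option.some_ne_none s ((P j).inj heq)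

lemma acceptable_trunc_iff (A : S → Prop) [DecidablePred A] (p : Pref S) (s : S) :
    Acceptable (trunc A p) s ↔ A s ∧ Acceptable p s := by
  have hbnd := rank_lt_bnd p none
  by_cases hs : A s <;> simp [Acceptable, trunc, goodB, hs]
  omega

noncomputable def onlyPref (o : Option S) : Pref S where
  rank x := if x = o then 0 else Option.elim x 1 fun s => Fintype.equivFin S s + 2
  inj := by
    intro x y h
    by_cases hx : x = o <;> by_cases hy : y = o <;>
      simp only [hx, hy, if_true, if_false] at h
    · rw [hx, hy]
    all_goals
      rcases x with _ | x <;> rcases y with _ | y <;>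
        simp only [Option.elim_none, Option.elim_some] at h
    all_goals first
      | rfl
      | omega
      | exact congrArg some ((Fintype.equivFin S).injective (Fin.ext (Nat.add_right_cancel h)))

lemma onlyAcceptable_onlyPref (o : Option S) : OnlyAcceptable (onlyPref o) o := by
  intro s
  by_cases hs : some s = o <;> by_cases hn : (none : Option S) = o <;>
    simp [onlyPref, hs, hn] <;> grind

section Restrict

variable (μ : Matching I S) (A : S → Prop) [DecidablePred A]

def restrict : Matching I S := fun j => (μ j).filter fun s => decide (A s)

variable {μ A}

lemma restrict_eq_some_iff {j : I} {s : S} : restrict μ A j = some s ↔ μ j = some s ∧ A s := by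
  simp [restrict]

lemma Feasible.restrict {E : Prio I S} (h : Feasible E μ) : Feasible E (restrict μ A) := by
  intro s
  refine (Finset.card_le_card fun j hj => ?_).trans (h s)
  rw [mem_assigned, restrict_eq_some_iff] at hj
  exact mem_assigned.2 hj.1

end Restrict

section DA

variable {E : Prio I S} {P : I → Pref S}

lemma stable_DA_of_eq_some {j : I} {s : S} (h : DA E P j = some s) : Stable E P (DA E P) := by
  unfold DA at h ⊢
  split_ifs at h ⊢ with hex
  exact hex.choose_spec.1

lemma DA_eq_of_forall_stable_iff {ν : Matching I S} (h : ∀ ν', Stable E P ν' ↔ ν' = ν) :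
    DA E P = ν := by
  have hex : ∃ μ, StudentOptimal E P μ :=
    ⟨ν, (h ν).2 rfl, fun ν' hν' i => by rw [(h ν').1 hν']⟩
  rw [DA, dif_pos hex]
  exact (h _).1 hex.choose_spec.1

variable {ν : Matching I S} (hacc : ∀ j s, Acceptable (P j) s ↔ ν j = some s)
include hacc

lemma stable_of_acceptable_iff (hν : Feasible E ν) : Stable E P ν := by
  refine ⟨hν, fun j => ?_, fun j s ⟨hlt, _⟩ => ?_⟩
  · cases hj : ν j with
    | none => exact le_rfl
    | some s => exact ((hacc j s).2 hj).le
  · cases hj : ν j with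
    | none =>
      rw [hj] at hlt
      exact Option.some_ne_none s (hj ▸ (hacc j s).1 hlt).symm
    | some s₀ =>
      rw [hj] at hlt
      have hs : ν j = some s := (hacc j s).1 (hlt.trans ((hacc j s₀).2 hj))
      rw [hj, Option.some_inj] at hs
      exact hlt.ne (by rw [hs])

/-- A stable matching can only shrink `ν`, and a student it leaves out would block it with
his `ν`-school, which then has a free seat. -/
lemma eq_of_stable_of_acceptable_iff (hν : Feasible E ν) {ν' : Matching I S}
    (hν' : Stable E P ν') : ν' = ν := by
  obtain ⟨-, hIR, hnb⟩ := hν'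
  have hsub : ∀ j s, ν' j = some s → ν j = some s := fun j s hj =>
    (hacc j s).1 (hIR.acceptable hj)
  funext j
  cases hj' : ν' j with
  | some s => exact (hsub j s hj').symm
  | none =>
    cases hj : ν j with
    | none => rfl
    | some s =>
      have hfree : (assigned ν' s).card < E.quota s := by
        refine (Finset.card_lt_card ⟨fun l hl => ?_, fun hs => ?_⟩).trans_le (hν s)
        · exact mem_assigned.2 (hsub l s (mem_assigned.1 hl))
        · have := mem_assigned.1 (hs (mem_assigned.2 hj))
          rw [hj'] at this
          exact Option.some_ne_none s this.symm
      exact absurd ⟨by rw [hj']; exact (hacc j s).2 hj, Or.inl hfree⟩ (hnb j s)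

lemma DA_eq_of_acceptable_iff (hν : Feasible E ν) : DA E P = ν :=
  DA_eq_of_forall_stable_iff fun _ => ⟨eq_of_stable_of_acceptable_iff hacc hν,
    by rintro rfl; exact stable_of_acceptable_iff hacc hν⟩

end DA

section TDA

variable (E : Prio I S) (t : S → ℕ) (Q : I → Pref S)

/-- The reports entering round `k + 1` of TDA. -/
noncomputable def roundProfile (k : ℕ) : I → Pref S := fun j =>
  if TDAaux E t Q k j = none then trunc (fun s => t s = k + 1) (Q j)
  else trunc (fun _ => False) (Q j)

variable {E t Q}

lemma TDAaux_succ (k : ℕ) (j : I) :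
    TDAaux E t Q (k + 1) j = (TDAaux E t Q k j).or (DA E (roundProfile E t Q k) j) := by
  rw [TDAaux]
  dsimp only
  split <;> rename_i h <;> rw [h] <;> rfl

lemma acceptable_roundProfile_iff {k : ℕ} {j : I} {s : S} :
    Acceptable (roundProfile E t Q k j) s ↔
      TDAaux E t Q k j = none ∧ t s = k + 1 ∧ Acceptable (Q j) s := by
  unfold roundProfile
  split_ifs with hj <;> simp [acceptable_trunc_iff, hj]

lemma exists_round_of_TDAaux_eq_some {r : ℕ} {j : I} {s : S} (h : TDAaux E t Q r j = some s) :
    ∃ k < r, TDAaux E t Q k j = none ∧ DA E (roundProfile E t Q k) j = some s := by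
  induction r with
  | zero => exact absurd h (Option.some_ne_none s).symm
  | succ r ih =>
    rw [TDAaux_succ] at h
    cases hr : TDAaux E t Q r j with
    | some s₀ =>
      rw [hr, Option.some_or] at h
      obtain ⟨k, hk, hkr⟩ := ih (hr.trans h)
      exact ⟨k, hk.trans (Nat.lt_succ_self r), hkr⟩
    | none =>
      rw [hr, Option.none_or] at h
      exact ⟨r, Nat.lt_succ_self r, hr, h⟩

lemma acceptable_of_TDAaux_eq_some {r : ℕ} {j : I} {s : S} (h : TDAaux E t Q r j = some s) :
    t s ≤ r ∧ Acceptable (Q j) s := by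
  obtain ⟨k, hk, -, hDA⟩ := exists_round_of_TDAaux_eq_some h
  obtain ⟨-, hts, hacc⟩ :=
    acceptable_roundProfile_iff.1 ((stable_DA_of_eq_some hDA).2.1.acceptable hDA)
  exact ⟨by omega, hacc⟩

end TDA

section Truthful

variable {E : Prio I S} {t : S → ℕ} {μ : Matching I S}

lemma DA_roundProfile_onlyPref (hμ : Feasible E μ) {r : ℕ}
    (hr : ∀ j s, TDAaux E t (fun l => onlyPref (μ l)) r j = some s → μ j = some s ∧ t s ≤ r) :
    DA E (roundProfile E t (fun l => onlyPref (μ l)) r) = restrict μ fun s => t s = r + 1 := by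
  refine DA_eq_of_acceptable_iff (fun j s => ?_) hμ.restrict
  rw [acceptable_roundProfile_iff, restrict_eq_some_iff]
  refine ⟨fun ⟨_, hts, hacc⟩ => ⟨(onlyAcceptable_onlyPref _ s).1 hacc, hts⟩,
    fun ⟨hμj, hts⟩ => ⟨?_, hts, (onlyAcceptable_onlyPref _ s).2 hμj⟩⟩
  refine Option.eq_none_iff_forall_ne_some.2 fun s' hs' => ?_
  obtain ⟨hμj', hle⟩ := hr j s' hs'
  obtain rfl := Option.some_inj.1 (hμj.symm.trans hμj')
  omega

lemma TDAaux_onlyPref_eq_some_iff (hμ : Feasible E μ) (ht : ∀ s, 1 ≤ t s) (r : ℕ) (j : I)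
    (s : S) : TDAaux E t (fun l => onlyPref (μ l)) r j = some s ↔ μ j = some s ∧ t s ≤ r := by
  induction r generalizing j s with
  | zero =>
    have := ht s
    simp only [TDAaux, reduceCtorEq, false_iff, not_and]
    omega
  | succ r ih =>
    rw [TDAaux_succ, DA_roundProfile_onlyPref hμ fun j s => (ih j s).1]
    cases hr : TDAaux E t (fun l => onlyPref (μ l)) r j with
    | some s₀ =>
      obtain ⟨hμj, hle⟩ := (ih j s₀).1 hr
      simp only [Option.some_or, hμj, Option.some_inj]
      constructor
      · rintro rfl; exact ⟨rfl, by omega⟩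
      · rintro ⟨rfl, -⟩; rfl
    | none =>
      have hnot := fun h => Option.some_ne_none s (((ih j s).2 h).symm.trans hr)
      rw [Option.none_or, restrict_eq_some_iff]
      exact and_congr_right fun hμj => by have : ¬ t s ≤ r := fun h => hnot ⟨hμj, h⟩; omega

lemma TDA_onlyPref (hμ : Feasible E μ) (ht : ∀ s, 1 ≤ t s) :
    TDA E t (fun l => onlyPref (μ l)) = μ :=
  funext fun j => Option.ext fun s => (TDAaux_onlyPref_eq_some_iff hμ ht _ j s).trans
    (and_iff_left (Finset.le_sup (Finset.mem_univ s)))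

end Truthful

section Deviation

variable {E : Prio I S} {t : S → ℕ} {Q : I → Pref S}

lemma TDAaux_eq_none_of_lt {j : I} {s : S} (honly : OnlyAcceptable (Q j) (some s)) {k : ℕ}
    (hk : k < t s) : TDAaux E t Q k j = none :=
  Option.eq_none_iff_forall_ne_some.2 fun s' hs' => by
    obtain ⟨hle, hacc⟩ := acceptable_of_TDAaux_eq_some hs'
    obtain rfl := Option.some_inj.1 ((honly s').1 hacc)
    omega

lemma TDAaux_ne_some_of_outranked {i : I} {s : S} {A : Finset I} (hiA : i ∉ A)
    (hA : E.quota s ≤ A.card) (honly : ∀ j ∈ A, OnlyAcceptable (Q j) (some s))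
    (hprio : ∀ j ∈ A, E.higher s j i) (r : ℕ) : TDAaux E t Q r i ≠ some s := by
  intro h
  obtain ⟨k, -, -, hDA⟩ := exists_round_of_TDAaux_eq_some h
  set ν := DA E (roundProfile E t Q k)
  have hν : Stable E (roundProfile E t Q k) ν := stable_DA_of_eq_some hDA
  obtain ⟨-, hts, -⟩ := acceptable_roundProfile_iff.1 (hν.2.1.acceptable hDA)
  obtain ⟨j, hjA, hjν⟩ := exists_mem_not_assigned hν.1 hDA hiA hA
  have hj_acc : Acceptable (roundProfile E t Q k j) s := acceptable_roundProfile_iff.2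
    ⟨TDAaux_eq_none_of_lt (honly j hjA) (by omega), hts, (honly j hjA s).2 rfl⟩
  have hj_none : ν j = none := Option.eq_none_iff_forall_ne_some.2 fun s' hs' => by
    obtain ⟨-, -, hacc⟩ := acceptable_roundProfile_iff.1 (hν.2.1.acceptable hs')
    exact hjν (hs'.trans ((honly j hjA s').1 hacc).symm)
  exact hν.2.2 j s ⟨by rwa [hj_none], Or.inr ⟨i, hDA, hprio j hjA⟩⟩

end Deviation

/-- Every stable matching is a Nash equilibrium outcome of the TDA
mechanism, for any tier structure. -/
theorem stable_subset_TDA_NashOutcomes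
    (E : Prio I S) (t : S → ℕ) (T : ℕ) (ht : IsTierStructure t T)
    (R : I → Pref S) (μ : Matching I S) (hstable : Stable E R μ) :
    NashOutcome R (TDA E t) μ := by
  obtain ⟨hfeas, hIR, hnb⟩ := hstable
  have hTDA := TDA_onlyPref hfeas fun s => (ht.1 s).1
  refine ⟨fun l => onlyPref (μ l), fun i q => ?_, hTDA⟩
  rw [hTDA]
  by_contra! hlt
  cases hi : TDA E t (Function.update (fun l => onlyPref (μ l)) i q) i with
  | none =>
    rw [hi] at hlt
    exact (hIR i).not_gt hlt
  | some s =>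
    rw [hi] at hlt
    have hiμ : i ∉ assigned μ s := fun h => hlt.ne (by rw [mem_assigned.1 h])
    have hfull : E.quota s ≤ (assigned μ s).card := not_lt.1 fun h => hnb i s ⟨hlt, Or.inl h⟩
    refine TDAaux_ne_some_of_outranked hiμ hfull (fun j hj => ?_) (fun j hj => ?_) _ hi
    · rw [Function.update_of_ne (ne_of_mem_of_not_mem hj hiμ), ← mem_assigned.1 hj]
      exact onlyAcceptable_onlyPref (μ j)
    · exact E.higher_of_not_higher (ne_of_mem_of_not_mem hj hiμ).symm
        fun h => hnb i s ⟨hlt, Or.inr ⟨j, mem_assigned.1 hj, h⟩⟩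

end SchoolChoice
end
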